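/- Every conditional antimatroid C is dismantlable: there exists an ordering c_1,…,c_m of all concepts of C such that each c_i is a corner of the level set C_i = {c_1,…,c_i}. In particular, any ordering of C that is nondecreasing with respect to cardinality of concepts is a corner peeling. -/

import Mathlib

variable {X : Type} [Fintype X] [DecidableEq X]

/-- Hamming distance between two subsets of `X` (size of symmetric difference). -/
def hdist (c c' : Finset X) : ℕ := ((c \ c') ∪ (c' \ c)).card

/-- The restriction `C|Y = {c ∩ Y : c ∈ C}`. -/
def restrictTo (C : Finset (Finset X)) (Y : Finset X) : Finset (Finset X) :=
  C.image (· ∩ Y)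

/-- `Y` is shattered by `C`, i.e. `C|Y = 2^Y`. -/
def Shatters (C : Finset (Finset X)) (Y : Finset X) : Prop :=
  ∀ s ∈ Y.powerset, ∃ c ∈ C, c ∩ Y = s

instance (C : Finset (Finset X)) : DecidablePred (Shatters C) := fun _ => by
  unfold Shatters; infer_instance

/-- The family `X̄(C)` of all sets shattered by `C`. -/
def shatteredSets (C : Finset (Finset X)) : Finset (Finset X) :=
  Finset.univ.filter (Shatters C)

/-- The VC dimension of `C`: maximum size of a shattered set. -/
def vcDim (C : Finset (Finset X)) : ℕ := (shatteredSets C).sup Finset.card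

/-- `C` is ample: `|C| = |X̄(C)|`. -/
def IsAmple (C : Finset (Finset X)) : Prop := C.card = (shatteredSets C).card

/-- `C` is a maximum class of VC dimension `d`. -/
def IsMaximumClass (C : Finset (Finset X)) (d : ℕ) : Prop :=
  vcDim C = d ∧ C.card = ∑ i ∈ Finset.range (d + 1), (Fintype.card X).choose i

/-- `B` is a cube with support `Y`: `B = {t ∪ s : s ⊆ Y}` for some `t ⊆ X \ Y`. -/
def IsCubeS (B : Finset (Finset X)) (Y : Finset X) : Prop :=
  ∃ t : Finset X, t ∩ Y = ∅ ∧ B = Y.powerset.image (fun s => t ∪ s)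

/-- `B` is a cube. -/
def IsCube (B : Finset (Finset X)) : Prop := ∃ Y, IsCubeS B Y

/-- `B` is a cube of `C`: a cube contained in `C`. -/
def IsCubeOf (C B : Finset (Finset X)) : Prop := B ⊆ C ∧ IsCube B

/-- `B` is a maximal cube of `C` (maximal under inclusion among cubes of `C`). -/
def IsMaximalCubeOf (C B : Finset (Finset X)) : Prop :=
  IsCubeOf C B ∧ ∀ B', IsCubeOf C B' → B ⊆ B' → B = B'

/-- `c` is a corner of `C`: a concept of `C` belonging to a unique maximal cube of `C`. -/
def IsCornerOf (C : Finset (Finset X)) (c : Finset X) : Prop :=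
  c ∈ C ∧ ∃! B, IsMaximalCubeOf C B ∧ c ∈ B

/-- The one-inclusion graph `G(C)`. -/
def oneInclusionGraph (C : Finset (Finset X)) : SimpleGraph {c : Finset X // c ∈ C} where
  Adj c c' := hdist c.1 c'.1 = 1
  symm := by
    refine ⟨fun a b h => ?_⟩
    simpa [hdist, Finset.union_comm] using h
  loopless := by
    refine ⟨fun a h => ?_⟩
    simp [hdist] at h

/-- `C` is isometric: `G(C)` is connected and graph distances equal Hamming distances. -/
def IsIsometric (C : Finset (Finset X)) : Prop :=
  (oneInclusionGraph C).Connected ∧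
  ∀ c c' : {c : Finset X // c ∈ C}, (oneInclusionGraph C).dist c c' = hdist c.1 c'.1

/-- `C` is weakly isometric: `G(C)` is connected and graph distances equal Hamming
distances for pairs at Hamming distance at most 2. -/
def IsWeaklyIsometric (C : Finset (Finset X)) : Prop :=
  (oneInclusionGraph C).Connected ∧
  ∀ c c' : {c : Finset X // c ∈ C}, hdist c.1 c'.1 ≤ 2 →
    (oneInclusionGraph C).dist c c' = hdist c.1 c'.1

/-- A list of concepts is a corner peeling if it has no duplicates and each element is a
corner of the corresponding level set. -/
def IsCornerPeeling (l : List (Finset X)) : Prop :=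
  l.Nodup ∧ ∀ i (h : i < l.length), IsCornerOf ((l.take (i + 1)).toFinset) (l.get ⟨i, h⟩)

/-- `C` is dismantlable: it admits a corner peeling ordering of all its concepts. -/
def Dismantlable (C : Finset (Finset X)) : Prop :=
  ∃ l : List (Finset X), l.toFinset = C ∧ IsCornerPeeling l

/-- Non-clashing condition for a map `r`. -/
def NonClashing (C : Finset (Finset X)) (r : Finset X → Finset X) : Prop :=
  ∀ c ∈ C, ∀ c' ∈ C, c ≠ c' → c ∩ (r c ∪ r c') ≠ c' ∩ (r c ∪ r c')

/-- `r` is a representation map for `C`: a non-clashing bijection from `C` onto `X̄(C)`. -/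
def IsRepMap (C : Finset (Finset X)) (r : Finset X → Finset X) : Prop :=
  (∀ c ∈ C, r c ∈ shatteredSets C) ∧
  Set.InjOn r ↑C ∧
  (∀ Y ∈ shatteredSets C, ∃ c ∈ C, r c = Y) ∧
  NonClashing C r

/-- `C` admits an unlabeled sample compression scheme of size `k`. -/
def HasUSCS (C : Finset (Finset X)) (k : ℕ) : Prop :=
  ∃ (α : Finset X → Finset X → Finset X) (β : Finset X → Finset X),
    ∀ (Y : Finset X), ∀ c ∈ C,
      α Y (c ∩ Y) ⊆ Y ∧ (α Y (c ∩ Y)).card ≤ k ∧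
      β (α Y (c ∩ Y)) ∈ C ∧ β (α Y (c ∩ Y)) ∩ Y = c ∩ Y

/-- The cube of `2^X` with support `Y` containing `c`. -/
def cubeAt (c Y : Finset X) : Finset (Finset X) :=
  Y.powerset.image (fun s => (c \ Y) ∪ s)

/-- Condition (C1): for every `c ∈ C`, the cube with support `r c` containing `c`
is a cube of `C`. -/
def CondC1 (C : Finset (Finset X)) (r : Finset X → Finset X) : Prop :=
  ∀ c ∈ C, cubeAt c (r c) ⊆ C

/-- Condition (C2): every cube of `C` has a unique concept `c` with `r c ∩ supp B = ∅`. -/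
def CondC2 (C : Finset (Finset X)) (r : Finset X → Finset X) : Prop :=
  ∀ B Y, B ⊆ C → IsCubeS B Y → ∃! c, c ∈ B ∧ r c ∩ Y = ∅

/-- The facet of the cross-polytope corresponding to a subset `c ⊆ X`:
`+x ∈ σ_c` iff `x ∈ c` (where `+x = Sum.inl x` and `-x = Sum.inr x`). -/
def facet (c : Finset X) : Finset (X ⊕ X) :=
  c.image Sum.inl ∪ (Finset.univ \ c).image Sum.inr

/-- A list of facets of the cross-polytope is a partial shelling. -/
def IsPartialShelling (L : List (Finset (X ⊕ X))) : Prop :=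
  L.Nodup ∧ ∀ i j, i < j → j < L.length →
    ∃ k < j, ((L.getD k ∅) ∩ (L.getD j ∅)).card = Fintype.card X - 1 ∧
      (L.getD i ∅) ∩ (L.getD j ∅) ⊆ (L.getD k ∅) ∩ (L.getD j ∅)

/-- `Q` is an incomplete cube for `(C, D)` with support `σ`: a cube of `C` whose
support `σ` is a missed simplex (shattered by `C` but not by `D`). -/
def IsIncompleteCube (C D Q : Finset (Finset X)) (σ : Finset X) : Prop :=
  Q ⊆ C ∧ IsCubeS Q σ ∧ Shatters C σ ∧ ¬ Shatters D σ

/-- `c` is the source of the incomplete cube `Q` with support `σ`: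
`c ∈ Q` and `c ∩ σ ∉ D|σ`. -/
def IsSource (D Q : Finset (Finset X)) (σ : Finset X) (c : Finset X) : Prop :=
  c ∈ Q ∧ c ∩ σ ∉ restrictTo D σ

/-- The restriction `C_x = C|(X \ {x})`, with concepts viewed as subsets of `X`
avoiding `x`. -/
def restrictX (C : Finset (Finset X)) (x : X) : Finset (Finset X) :=
  C.image (·.erase x)

/-- The reduction `C^x = {c ⊆ X \ {x} : c ∈ C and c ∪ {x} ∈ C}`. -/
def reduction (C : Finset (Finset X)) (x : X) : Finset (Finset X) :=
  C.filter (fun c => x ∉ c ∧ insert x c ∈ C)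

/-- The interval `B(c,c') = {t : d(c,t) + d(t,c') = d(c,c')}`. -/
def interval (c c' : Finset X) : Finset (Finset X) :=
  Finset.univ.filter (fun t => hdist c t + hdist t c' = hdist c c')

/-- `C'` is convex in `C`. -/
def IsConvexIn (C C' : Finset (Finset X)) : Prop :=
  ∀ c ∈ C', ∀ c'' ∈ C', interval c c'' ∩ C ⊆ C'

/-- `C'` is locally convex in `C`. -/
def IsLocallyConvexIn (C C' : Finset (Finset X)) : Prop :=
  ∀ c ∈ C', ∀ c'' ∈ C', hdist c c'' = 2 → interval c c'' ∩ C ⊆ C'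

/-- `C` is a conditional antimatroid: contains `∅`, closed under intersection, and
every concept is generated by its extremal points. -/
def IsCondAntimatroid (C : Finset (Finset X)) : Prop :=
  ∅ ∈ C ∧ (∀ c ∈ C, ∀ c' ∈ C, c ∩ c' ∈ C) ∧
  ∀ c ∈ C, ∀ c' ∈ C, (c.filter (fun x => c.erase x ∈ C)) ⊆ c' → c ⊆ c'

/-!
A cube through `c` with support `Y` consists of the sets agreeing with `c` outside `Y`, so `c` is
a corner of `D` as soon as the supports of the cubes of `D` through `c` have a greatest element.
Let `C` be closed under intersection and let `D ⊆ C` contain a concept `c` of maximal size in `D`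
and every concept of `C` smaller than `c`. A cube of `D` through `c` has `c` as its top, so its
support consists of points `x` with `c \ {x} ∈ D`; conversely every `c \ u` with `u` made of such
points is an intersection of the `c \ {x}`, hence in `C`, hence in `D`. So these points form the
greatest support, and every ordering of `C` by nondecreasing size peels corners.
-/

open Finset

section

variable {α : Type} [DecidableEq α]

theorem mem_cubeAt {a c Y : Finset α} : a ∈ cubeAt c Y ↔ a \ Y = c \ Y := by
  simp only [cubeAt, mem_image, mem_powerset]
  constructor
  · rintro ⟨s, hs, rfl⟩
    rw [union_sdiff_distrib, Finset.sdiff_idem, sdiff_eq_empty_iff_subset.mpr hs, union_empty]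
  · intro h
    refine ⟨a ∩ Y, inter_subset_right, ?_⟩
    rw [← h, sdiff_union_inter]

theorem self_mem_cubeAt (c Y : Finset α) : c ∈ cubeAt c Y := mem_cubeAt.mpr rfl

theorem isCubeS_cubeAt (c Y : Finset α) : IsCubeS (cubeAt c Y) Y :=
  ⟨c \ Y, sdiff_inter_self _ _, rfl⟩

theorem IsCubeS.eq_cubeAt {B : Finset (Finset α)} {Y c : Finset α} (hB : IsCubeS B Y)
    (hc : c ∈ B) : B = cubeAt c Y := by
  obtain ⟨t, htY, rfl⟩ := hB
  obtain ⟨s, hs, rfl⟩ := mem_image.mp hc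
  have ht : (t ∪ s) \ Y = t := by
    rw [union_sdiff_distrib, sdiff_eq_empty_iff_subset.mpr (mem_powerset.mp hs), union_empty,
      Finset.sdiff_eq_self_iff_disjoint, disjoint_iff_inter_eq_empty, htY]
  rw [cubeAt, ht]

theorem cubeAt_subset_cubeAt_iff {c Y Z : Finset α} : cubeAt c Y ⊆ cubeAt c Z ↔ Y ⊆ Z := by
  constructor
  · intro h x hxY
    by_contra hxZ
    have hflip := congrArg (x ∈ ·)
      (mem_cubeAt.mp (h (mem_cubeAt.mpr (symmDiff_sdiff_right c Y))))
    simp [mem_symmDiff, hxY, hxZ] at hflip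
  · intro hYZ a ha
    rw [mem_cubeAt] at ha ⊢
    rw [← union_eq_right.mpr hYZ, ← sup_eq_union, ← sdiff_sdiff_left, ← sdiff_sdiff_left, ha]

theorem isCornerOf_of_isGreatest {D : Finset (Finset α)} {c Y : Finset α} (hc : c ∈ D)
    (hY : IsGreatest {Z | cubeAt c Z ⊆ D} Y) : IsCornerOf D c := by
  have hcube : IsCubeOf D (cubeAt c Y) := ⟨hY.1, Y, isCubeS_cubeAt c Y⟩
  have hle : ∀ B, IsCubeOf D B → c ∈ B → B ⊆ cubeAt c Y := by
    rintro B ⟨hBD, Z, hZ⟩ hcB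
    rw [hZ.eq_cubeAt hcB] at hBD ⊢
    exact cubeAt_subset_cubeAt_iff.mpr (hY.2 hBD)
  refine ⟨hc, cubeAt c Y, ⟨⟨hcube, fun B hB hYB => ?_⟩, self_mem_cubeAt c Y⟩, ?_⟩
  · exact hYB.antisymm (hle B hB (hYB (self_mem_cubeAt c Y)))
  · rintro B ⟨⟨hB, hmax⟩, hcB⟩
    exact hmax _ hcube (hle B hB hcB)

theorem sdiff_mem_of_forall_erase_mem {C : Finset (Finset α)}
    (hC : InfClosed (C : Set (Finset α))) {c u : Finset α} (hc : c ∈ C)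
    (hu : ∀ x ∈ u, c.erase x ∈ C) : c \ u ∈ C := by
  induction u using Finset.induction_on with
  | empty => simpa using hc
  | insert x u _ ih =>
    have heq : c \ insert x u = (c \ u) ∩ c.erase x := by
      ext y; simp only [mem_sdiff, mem_insert, mem_inter, mem_erase]; tauto
    rw [heq]
    exact hC (ih fun y hy => hu y (mem_insert_of_mem hy)) (hu x (mem_insert_self x u))

theorem isGreatest_setOf_cubeAt_subset {C D : Finset (Finset α)}
    (hC : InfClosed (C : Set (Finset α))) (hDC : D ⊆ C) {c : Finset α} (hc : c ∈ D)
    (hmax : ∀ d ∈ D, d.card ≤ c.card) (hlow : ∀ d ∈ C, d.card < c.card → d ∈ D) :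
    IsGreatest {Z | cubeAt c Z ⊆ D} {x ∈ c | c.erase x ∈ D} := by
  set Y := {x ∈ c | c.erase x ∈ D}
  constructor
  · intro a ha
    have hagree : a \ Y = c \ Y := mem_cubeAt.mp ha
    have hmem : ∀ x ∈ c, x ∉ Y → x ∈ a := fun x hxc hxY =>
      (mem_sdiff.mp (hagree ▸ mem_sdiff.mpr ⟨hxc, hxY⟩ : x ∈ a \ Y)).1
    have hac : a ⊆ c := fun x hxa => by
      by_cases hxY : x ∈ Y
      · exact (mem_filter.mp hxY).1
      · exact (mem_sdiff.mp (hagree ▸ mem_sdiff.mpr ⟨hxa, hxY⟩ : x ∈ c \ Y)).1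
    obtain rfl | hlt := hac.eq_or_ssubset
    · exact hc
    refine hlow a ?_ (card_lt_card hlt)
    rw [← Finset.sdiff_sdiff_eq_self hac]
    refine sdiff_mem_of_forall_erase_mem hC (hDC hc) fun x hx => hDC ?_
    obtain ⟨hxc, hxa⟩ := mem_sdiff.mp hx
    by_contra hxD
    exact hxa (hmem x hxc fun hxY => hxD (mem_filter.mp hxY).2)
  · intro Z hZ x hxZ
    have hins : insert x c ∈ D := hZ (mem_cubeAt.mpr (insert_sdiff_of_mem c hxZ))
    have hxc : x ∈ c := by
      by_contra hxc
      have := hmax _ hins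
      rw [card_insert_of_notMem hxc] at this
      omega
    have herase : c.erase x ∈ D := hZ (mem_cubeAt.mpr (by
      rw [erase_sdiff_comm, erase_eq_of_notMem fun h => (mem_sdiff.mp h).2 hxZ]))
    exact mem_filter.mpr ⟨hxc, herase⟩

theorem List.exists_nodup_pairwise_map_le {β : Type*} [LinearOrder β] (s : Finset α)
    (f : α → β) : ∃ l : List α, l.Nodup ∧ l.toFinset = s ∧ (l.map f).Pairwise (· ≤ ·) := by
  have hperm := s.toList.mergeSort_perm (fun a b => decide (f a ≤ f b))
  have hsort := s.toList.pairwise_mergeSort (le := fun a b => decide (f a ≤ f b))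
    (fun a b c hab hbc => by simpa using (of_decide_eq_true hab).trans (of_decide_eq_true hbc))
    (fun a b => by simpa using le_total (f a) (f b))
  refine ⟨_, hperm.nodup_iff.mpr s.nodup_toList, ?_, List.pairwise_map.mpr (hsort.imp ?_)⟩
  · ext a; simp [hperm.mem_iff]
  · exact fun h => of_decide_eq_true h

theorem isCornerOf_take_of_pairwise {C : Finset (Finset α)}
    (hC : InfClosed (C : Set (Finset α))) {l : List (Finset α)} (hl : l.toFinset = C)
    (hsort : (l.map Finset.card).Pairwise (· ≤ ·)) (i : ℕ) (hi : i < l.length) :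
    IsCornerOf (l.take (i + 1)).toFinset l[i] := by
  have hmono : ∀ j k (hj : j < l.length) (hk : k < l.length), j ≤ k → l[j].card ≤ l[k].card := by
    intro j k hj hk hjk
    obtain rfl | hlt := hjk.eq_or_lt
    · exact le_rfl
    · have := List.pairwise_iff_getElem.mp hsort j k (by simpa) (by simpa) hlt
      rwa [List.getElem_map, List.getElem_map] at this
  have hmem_take : ∀ j (hj : j < l.length), j ≤ i → l[j] ∈ (l.take (i + 1)).toFinset :=
    fun j hj hji => List.mem_toFinset.mpr (List.mem_take_iff_getElem.mpr ⟨j, by omega, rfl⟩)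
  have hc : l[i] ∈ (l.take (i + 1)).toFinset := hmem_take i hi le_rfl
  refine isCornerOf_of_isGreatest hc (isGreatest_setOf_cubeAt_subset hC ?_ hc ?_ ?_)
  · intro d hd
    rw [← hl, List.mem_toFinset]
    exact List.take_subset _ _ (List.mem_toFinset.mp hd)
  · intro d hd
    obtain ⟨j, hj, rfl⟩ := List.mem_take_iff_getElem.mp (List.mem_toFinset.mp hd)
    exact hmono j i (by omega) hi (by omega)
  · intro d hd hlt
    rw [← hl, List.mem_toFinset, List.mem_iff_getElem] at hd
    obtain ⟨j, hj, rfl⟩ := hd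
    exact hmem_take j hj (not_lt.mp fun hij => (hmono i j hi hj hij.le).not_gt hlt)

theorem isCornerPeeling_of_pairwise_card {C : Finset (Finset α)}
    (hC : InfClosed (C : Set (Finset α))) {l : List (Finset α)} (hnd : l.Nodup)
    (hl : l.toFinset = C) (hsort : (l.map Finset.card).Pairwise (· ≤ ·)) : IsCornerPeeling l :=
  ⟨hnd, fun i hi => isCornerOf_take_of_pairwise hC hl hsort i hi⟩

end

set_option linter.unusedSectionVars false

/-- Every conditional antimatroid is dismantlable; in particular any
ordering of its concepts that is nondecreasing with respect to cardinality is a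
corner peeling. -/
theorem stmt_8 (C : Finset (Finset X)) (hC : IsCondAntimatroid C) :
    Dismantlable C ∧
    ∀ l : List (Finset X), l.Nodup → l.toFinset = C →
      List.Pairwise (· ≤ ·) (l.map Finset.card) → IsCornerPeeling l := by
  have hinter : InfClosed (C : Set (Finset X)) := fun a ha b hb => hC.2.1 a ha b hb
  obtain ⟨l, hnd, hl, hsort⟩ := List.exists_nodup_pairwise_map_le C Finset.card
  exact ⟨⟨l, hl, isCornerPeeling_of_pairwise_card hinter hnd hl hsort⟩,
    fun l hnd hl hsort => isCornerPeeling_of_pairwise_card hinter hnd hl hsort⟩
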